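/- Assume in addition that there is ε > 0 with u_k ≥ ε for every k ≥ 0, and for an integer d ≥ 1 set δ_d := sup_{k ≥ d} |u_k − 1/μ|. Then there is a constant C < ∞, depending only on ε and μ, such that for all integers d ≥ 1 and all integers 0 ≤ r ≤ s ≤ N with s − r ≥ d: |(u_{s−r}·u_N)/(u_{N−r}·u_s) − 1| ≤ C·δ_d. (Interpretation: the conditioned renewal process on {0,…,N} is clustering: the joint probability of a prescribed renewal configuration on {0,…,r−1} ending with a renewal point at r and a prescribed renewal configuration on {s,…,N−1} beginning with a renewal point at s differs from the product of the two probabilities by at most a C·δ_d relative error.) -/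

import Mathlib

/-!
All four of `u_{s-r}`, `u_N`, `u_{N-r}`, `u_s` have index at least `d`, so each lies within `δ_d`
of `1/μ`. Writing `u_{s-r} u_N - u_{N-r} u_s = (u_{s-r} - u_{N-r}) u_N + u_{N-r} (u_N - u_s)` and
using `u ≤ 1`, the numerator of `(u_{s-r} u_N)/(u_{N-r} u_s) - 1` is at most `4 δ_d`, while the
denominator is at least `ε²`. Hence `C = 4/ε²` works;
the supremum `δ_d` is a genuine one (not the junk value of `⨆`) because `0 ≤ u ≤ 1`.
-/

noncomputable section

/-- The renewal sequence `(u_N)` associated with the waiting-time distribution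
`(q_n)_{n ≥ 1}`: `u_0 = 1` and `u_N = Σ_{n=1}^N q_n · u_{N-n}`. -/
def renewalSeq (q : ℕ → ℝ) : ℕ → ℝ
  | 0 => 1
  | N + 1 => ∑ n ∈ Finset.range (N + 1), q (n + 1) * renewalSeq q (N - n)
  decreasing_by omega

lemma renewalSeq_le_one {q : ℕ → ℝ} (hq : ∀ n, 0 ≤ q n) (hs : Summable q)
    (h1 : ∑' n, q n ≤ 1) (N : ℕ) : renewalSeq q N ≤ 1 := by
  induction N using Nat.strong_induction_on with
  | _ N ih =>
    match N with
    | 0 => simp [renewalSeq]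
    | N + 1 =>
      rw [renewalSeq]
      calc ∑ n ∈ Finset.range (N + 1), q (n + 1) * renewalSeq q (N - n)
          ≤ ∑ n ∈ Finset.range (N + 1), q (n + 1) :=
            Finset.sum_le_sum fun n _ =>
              mul_le_of_le_one_right (hq (n + 1)) (ih (N - n) (by omega))
        _ ≤ ∑ m ∈ Finset.range (N + 2), q m := by
            rw [Finset.sum_range_succ' q (N + 1)]
            linarith [hq 0]
        _ ≤ ∑' n, q n := hs.sum_le_tsum _ fun i _ => hq i
        _ ≤ 1 := h1

lemma le_iSup_tail {f : ℕ → ℝ} (hf : BddAbove (Set.range f)) {d k : ℕ} (hk : d ≤ k) :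
    f k ≤ ⨆ k : {k : ℕ // d ≤ k}, f k :=
  le_ciSup (f := fun k : {k : ℕ // d ≤ k} => f k)
    (hf.mono (by rintro _ ⟨k, rfl⟩; exact ⟨k, rfl⟩)) ⟨k, hk⟩

lemma bddAbove_range_abs_sub {u : ℕ → ℝ} (hu0 : ∀ k, 0 ≤ u k) (hu1 : ∀ k, u k ≤ 1) (L : ℝ) :
    BddAbove (Set.range fun k => |u k - L|) := by
  refine ⟨1 + |L|, ?_⟩
  rintro _ ⟨k, rfl⟩
  calc |u k - L| ≤ |u k| + |L| := abs_sub _ _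
    _ ≤ 1 + |L| := by rw [abs_of_nonneg (hu0 k)]; linarith [hu1 k]

lemma abs_mul_div_mul_sub_one_le {a b c e L δ ε : ℝ} (hε : 0 < ε)
    (hb : 0 ≤ b) (hb1 : b ≤ 1) (hc : ε ≤ c) (hc1 : c ≤ 1) (he : ε ≤ e)
    (haL : |a - L| ≤ δ) (hbL : |b - L| ≤ δ) (hcL : |c - L| ≤ δ) (heL : |e - L| ≤ δ) :
    |a * b / (c * e) - 1| ≤ 4 / (ε * ε) * δ := by
  have hc0 : 0 < c := hε.trans_le hc
  have hce : 0 < c * e := mul_pos hc0 (hε.trans_le he)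
  have hac : |a - c| ≤ 2 * δ := by
    calc |a - c| = |(a - L) - (c - L)| := by ring_nf
      _ ≤ |a - L| + |c - L| := abs_sub _ _
      _ ≤ 2 * δ := by linarith
  have hbe : |b - e| ≤ 2 * δ := by
    calc |b - e| = |(b - L) - (e - L)| := by ring_nf
      _ ≤ |b - L| + |e - L| := abs_sub _ _
      _ ≤ 2 * δ := by linarith
  have hnum : |a * b - c * e| ≤ 4 * δ := by
    calc |a * b - c * e| = |(a - c) * b + c * (b - e)| := by ring_nf
      _ ≤ |(a - c) * b| + |c * (b - e)| := abs_add_le _ _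
      _ = |a - c| * b + c * |b - e| := by
          rw [abs_mul, abs_mul, abs_of_nonneg hb, abs_of_pos hc0]
      _ ≤ 2 * δ * 1 + 1 * (2 * δ) := by
          gcongr
          exact (abs_nonneg _).trans hac
      _ = 4 * δ := by ring
  rw [div_sub_one hce.ne', abs_div, abs_of_pos hce]
  calc |a * b - c * e| / (c * e) ≤ 4 * δ / (ε * ε) :=
        div_le_div₀ ((abs_nonneg _).trans hnum) hnum (by positivity)
          (mul_le_mul hc he hε.le hc0.le)
    _ = 4 / (ε * ε) * δ := by ring

/-- Clustering of the conditioned renewal process: if `u_k ≥ ε > 0` for all `k`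
and `δ_d = sup_{k ≥ d} |u_k - 1/μ|`, then
`|(u_{s-r}·u_N)/(u_{N-r}·u_s) - 1| ≤ C·δ_d` for all `0 ≤ r ≤ s ≤ N` with
`s - r ≥ d`, with `C` depending only on `ε` and `μ`. -/
theorem renewal_clustering (ε μ : ℝ) (hε : 0 < ε) :
    ∃ C : ℝ, ∀ q : ℕ → ℝ, q 0 = 0 → (∀ n, 0 ≤ q n) → HasSum q 1 →
      Summable (fun n : ℕ => (n : ℝ) * q n) → (∑' n : ℕ, (n : ℝ) * q n) = μ →
      (∀ k, ε ≤ renewalSeq q k) →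
      ∀ d : ℕ, 1 ≤ d → ∀ N r s : ℕ, r + d ≤ s → s ≤ N →
        |renewalSeq q (s - r) * renewalSeq q N /
            (renewalSeq q (N - r) * renewalSeq q s) - 1|
          ≤ C * ⨆ k : {k : ℕ // d ≤ k}, |renewalSeq q (k : ℕ) - 1 / μ| := by
  refine ⟨4 / (ε * ε), ?_⟩
  intro q _ hq hsum _ _ hlow d _ N r s hrs hsN
  have hu0 : ∀ k, 0 ≤ renewalSeq q k := fun k => hε.le.trans (hlow k)
  have hu1 : ∀ k, renewalSeq q k ≤ 1 :=
    renewalSeq_le_one hq hsum.summable hsum.tsum_eq.le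
  have hδ : ∀ k, d ≤ k → |renewalSeq q k - 1 / μ| ≤
      ⨆ k : {k : ℕ // d ≤ k}, |renewalSeq q (k : ℕ) - 1 / μ| :=
    fun k hk => le_iSup_tail (bddAbove_range_abs_sub hu0 hu1 _) hk
  exact abs_mul_div_mul_sub_one_le hε (hu0 N) (hu1 N) (hlow _) (hu1 _) (hlow s)
    (hδ _ (by omega)) (hδ _ (by omega)) (hδ _ (by omega)) (hδ _ (by omega))
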